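/- Let T be a profinite topological space and let {Y_j}_{j ∈ J} be a filtered diagram of sets. Then the canonical map colim_j LC(T, Y_j) → LC(T, colim_j Y_j), induced by postcomposition with the structure maps Y_j → colim_j Y_j, is a bijection, where each set Y is regarded with the discrete topology. -/

import Mathlib

/-! A locally constant function on a compact space takes only finitely many values. In a
filtered colimit of sets, finitely many elements lift to a common stage, and finitely many
equalities between elements of one stage already hold at a single later stage. -/

open CategoryTheory CategoryTheory.Limits

universe u

/-- The functor `LC(T, -)` sending a set `Y` (with the discrete topology) to the
locally constant functions `T → Y`, and a map to postcomposition. -/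
def lcFunctor (T : Type u) [TopologicalSpace T] {J : Type u} [SmallCategory J]
    (F : J ⥤ Type u) : J ⥤ Type u where
  obj j := LocallyConstant T (F.obj j)
  map f := TypeCat.ofHom (LocallyConstant.map (F.map f))
  map_id j := by
    ext g x
    simp
  map_comp f g := by
    ext h x
    simp

/-- The cocone on `LC(T, F(-))` with vertex `LC(T, colim F)` whose legs are given
by postcomposition with the structure maps `F(j) → colim F`; its induced map
out of `colim_j LC(T, F(j))` is the canonical map of the statement. -/
noncomputable def lcCocone (T : Type u) [TopologicalSpace T] {J : Type u} [SmallCategory J]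
    (F : J ⥤ Type u) : Cocone (lcFunctor T F) where
  pt := LocallyConstant T (colimit F)
  ι :=
    { app := fun j => TypeCat.ofHom (LocallyConstant.map (colimit.ι F j))
      naturality := fun i j f => by
        ext g
        apply LocallyConstant.ext
        intro x
        exact colimit.w_apply F f _ }

namespace CategoryTheory.Limits.Types.FilteredColimit

variable {J : Type*} [Category J] {F : J ⥤ Type u} {c : Cocone F}

theorem exists_lift_of_finite [IsFiltered J] (hc : IsColimit c) {ι : Type*} [Finite ι]
    (y : ι → c.pt) : ∃ (j : J) (x : ι → F.obj j), ∀ p, c.ι.app j (x p) = y p := by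
  classical
  cases nonempty_fintype ι
  choose j x hx using fun p => Types.jointly_surjective_of_isColimit hc (y p)
  obtain ⟨k, hk⟩ := IsFiltered.sup_objs_exists (Finset.univ.image j)
  let f p : j p ⟶ k := (hk (Finset.mem_image_of_mem j (Finset.mem_univ p))).some
  exact ⟨k, fun p => F.map (f p) (x p), fun p => (c.w_apply (f p) (x p)).trans (hx p)⟩

theorem exists_map_eq_map_of_finite [IsFilteredOrEmpty J] (hc : IsColimit c) {i : J}
    {ι : Type*} [Finite ι] (x y : ι → F.obj i) (hxy : ∀ p, c.ι.app i (x p) = c.ι.app i (y p)) :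
    ∃ (k : J) (φ : i ⟶ k), ∀ p, F.map φ (x p) = F.map φ (y p) := by
  choose k f hf using fun p => (isColimit_eq_iff' hc (x p) (y p)).mp (hxy p)
  obtain ⟨l, φ, g, hg⟩ := IsFiltered.wideSpan f
  refine ⟨l, φ, fun p => ?_⟩
  rw [← hg p, Functor.map_comp_apply, Functor.map_comp_apply, hf p]

end CategoryTheory.Limits.Types.FilteredColimit

namespace LocallyConstant

open Types.FilteredColimit

variable {T : Type*} [TopologicalSpace T] [CompactSpace T]
  {J : Type*} [Category J] {F : J ⥤ Type u} {c : Cocone F}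

theorem exists_map_ι_eq [IsFiltered J] (hc : IsColimit c) (g : LocallyConstant T c.pt) :
    ∃ (j : J) (g' : LocallyConstant T (F.obj j)), g'.map (c.ι.app j) = g := by
  have : Finite (Set.range g) := g.range_finite.to_subtype
  obtain ⟨j, x, hx⟩ := exists_lift_of_finite hc (Subtype.val : Set.range g → c.pt)
  refine ⟨j, (desc (Set.rangeFactorization g) g rfl Subtype.val_injective).map x, ?_⟩
  ext t
  exact hx _

theorem exists_map_eq_map_of_map_ι_eq [IsFilteredOrEmpty J] (hc : IsColimit c) {i : J}
    (g h : LocallyConstant T (F.obj i)) (hgh : g.map (c.ι.app i) = h.map (c.ι.app i)) :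
    ∃ (k : J) (φ : i ⟶ k), g.map (F.map φ) = h.map (F.map φ) := by
  let R := Set.range fun t => (g t, h t)
  have : Finite R := ((g.isLocallyConstant.prodMk h.isLocallyConstant).range_finite).to_subtype
  obtain ⟨k, φ, hφ⟩ := exists_map_eq_map_of_finite hc (fun p : R => p.1.1) (fun p : R => p.1.2)
    (by rintro ⟨_, t, rfl⟩; exact LocallyConstant.congr_fun hgh t)
  exact ⟨k, φ, ext fun t => hφ ⟨_, t, rfl⟩⟩

end LocallyConstant

theorem lcCocone_desc_ι_apply (T : Type u) [TopologicalSpace T] {J : Type u} [SmallCategory J]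
    (F : J ⥤ Type u) (j : J) (g : (lcFunctor T F).obj j) :
    colimit.desc (lcFunctor T F) (lcCocone T F) (colimit.ι (lcFunctor T F) j g) =
      LocallyConstant.map (colimit.ι F j) g :=
  colimit.ι_desc_apply (lcCocone T F) j g

theorem lc_colimit_bijective_general (T : Type u) [TopologicalSpace T] [CompactSpace T]
    {J : Type u} [SmallCategory J] [IsFiltered J] (F : J ⥤ Type u) :
    Function.Bijective (colimit.desc (lcFunctor T F) (lcCocone T F)) := by
  constructor
  · intro a b hab
    obtain ⟨i, g, h, rfl, rfl⟩ :=
      Types.FilteredColimit.jointly_surjective_of_isColimit₂ (colimit.isColimit _) a b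
    simp only [colimit.cocone_ι] at hab
    rw [lcCocone_desc_ι_apply, lcCocone_desc_ι_apply] at hab
    obtain ⟨k, φ, hφ⟩ :=
      LocallyConstant.exists_map_eq_map_of_map_ι_eq (colimit.isColimit F) g h hab
    exact (Types.FilteredColimit.isColimit_eq_iff' (colimit.isColimit _) g h).mpr ⟨k, φ, hφ⟩
  · intro g
    obtain ⟨j, g', rfl⟩ := LocallyConstant.exists_map_ι_eq (colimit.isColimit F) g
    exact ⟨colimit.ι (lcFunctor T F) j g', lcCocone_desc_ι_apply T F j g'⟩

/-- For a profinite space `T` and a filtered diagram of sets `{Y_j}`, the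
canonical map `colim_j LC(T, Y_j) → LC(T, colim_j Y_j)` is a bijection. -/
theorem lc_colimit_bijective (T : Type u) [TopologicalSpace T] [CompactSpace T]
    [T2Space T] [TotallyDisconnectedSpace T]
    {J : Type u} [SmallCategory J] [IsFiltered J] (F : J ⥤ Type u) :
    Function.Bijective (colimit.desc (lcFunctor T F) (lcCocone T F)) :=
  lc_colimit_bijective_general T F
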